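/- (GCE unbiasedness for the per-group loss) Let Z be a nonempty finite set partitioned into nonempty groups S_1, …, S_p, let f : Z → ℝ, and let m ≥ 1. Define the target loss F = (1/p) Σ_{k=1}^p (1/|S_k|) Σ_{z ∈ S_k} f(z). Draw a batch x uniformly at random from Z^m, and define the categorical gradient estimator F̂(x) = (1/p) Σ_{k=1}^p A_k(x), where A_k(x) is the average of f over the coordinates of x lying in S_k if at least one coordinate lies in S_k, and 0 otherwise. Then 𝔼[F̂(x)] = (1/p) Σ_{k=1}^p P₁(k) · (1/|S_k|) Σ_{z ∈ S_k} f(z), where P₁(k) = 1 − ((|Z| − |S_k|)/|Z|)^m; in particular, for each group k the conditional expectation of A_k(x) given that the batch contains at least one element of S_k equals (1/|S_k|) Σ_{z ∈ S_k} f(z), the k-th term of F times p. -/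

import Mathlib

/-!
`groupAvg S f x` is linear in `f`: summed over all batches it equals `∑ z ∈ S, f z * w z`,
where `w z` counts each occurrence of `z` in a batch `x` with weight `1 / hitCount S x`.
A transposition of two elements of `S` permutes the batches and preserves hit counts, so
`w` is constant on `S`, and taking `f = 1` identifies `w · |S|` with the number of batches
meeting `S`. Hence the total is that number times the mean of `f` over `S`; the batches
missing `S` are exactly `(Sᶜ)^m`.
-/

open Finset

/-- The number of coordinates of the batch `x : Z^m` that lie in the group `S`. -/
def hitCount {Z : Type*} [DecidableEq Z] (S : Finset Z) {m : ℕ} (x : Fin m → Z) : ℕ :=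
  (Finset.univ.filter fun i => x i ∈ S).card

/-- `A_k(x)`: the average of `f` over the coordinates of `x` lying in the group `S` if at
least one coordinate lies in `S`, and `0` otherwise. -/
noncomputable def groupAvg {Z : Type*} [DecidableEq Z] (S : Finset Z) (f : Z → ℝ)
    {m : ℕ} (x : Fin m → Z) : ℝ :=
  if h : 0 < hitCount S x then
    (∑ i ∈ Finset.univ.filter fun i => x i ∈ S, f (x i)) / (hitCount S x : ℝ)
  else 0

section GroupAverage

variable {Z : Type*} [DecidableEq Z] {m : ℕ}

lemma groupAvg_eq_sum_div (S : Finset Z) (f : Z → ℝ) (x : Fin m → Z) :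
    groupAvg S f x = (∑ i ∈ univ.filter fun i => x i ∈ S, f (x i)) / hitCount S x := by
  unfold groupAvg
  split_ifs with h
  · rfl
  · rw [Nat.eq_zero_of_not_pos h, Nat.cast_zero, div_zero]

lemma groupAvg_one (S : Finset Z) (x : Fin m → Z) :
    groupAvg S (fun _ => 1) x = if 1 ≤ hitCount S x then 1 else 0 := by
  rw [groupAvg_eq_sum_div, sum_const, nsmul_one, ← hitCount]
  split_ifs with h
  · exact div_self (by exact_mod_cast (Nat.one_le_iff_ne_zero.1 h))
  · rw [Nat.lt_one_iff.1 (not_le.1 h), Nat.cast_zero, div_zero]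

lemma one_le_hitCount_of_groupAvg_ne_zero {S : Finset Z} {f : Z → ℝ} {x : Fin m → Z}
    (h : groupAvg S f x ≠ 0) : 1 ≤ hitCount S x := by
  by_contra hx
  exact h (dif_neg (by omega))

lemma sum_filter_mem_eq_sum_mul_card (S : Finset Z) (f : Z → ℝ) (x : Fin m → Z) :
    ∑ i ∈ univ.filter fun i => x i ∈ S, f (x i)
      = ∑ z ∈ S, f z * (univ.filter fun i => x i = z).card := by
  simp only [sum_filter, natCast_card_filter, mul_sum, mul_boole]
  rw [sum_comm]
  exact sum_congr rfl fun i _ => (sum_ite_eq S (x i) f).symm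

lemma hitCount_perm_comp (S : Finset Z) (σ : Equiv.Perm Z) (hσ : ∀ z, σ z ∈ S ↔ z ∈ S)
    (x : Fin m → Z) : hitCount S (σ ∘ x) = hitCount S x := by
  simp only [hitCount, Function.comp_apply, hσ]

variable [Fintype Z]

noncomputable def occurrenceWeight (S : Finset Z) (m : ℕ) (z : Z) : ℝ :=
  ∑ x : Fin m → Z, ((univ.filter fun i => x i = z).card : ℝ) / hitCount S x

lemma sum_groupAvg_eq_sum_mul_occurrenceWeight (S : Finset Z) (f : Z → ℝ) :
    ∑ x : Fin m → Z, groupAvg S f x = ∑ z ∈ S, f z * occurrenceWeight S m z := by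
  simp only [occurrenceWeight, mul_sum, groupAvg_eq_sum_div, sum_filter_mem_eq_sum_mul_card, sum_div,
    mul_div_assoc]
  exact sum_comm

lemma occurrenceWeight_perm (S : Finset Z) (σ : Equiv.Perm Z) (hσ : ∀ z, σ z ∈ S ↔ z ∈ S)
    (z : Z) : occurrenceWeight S m (σ z) = occurrenceWeight S m z := by
  refine (Fintype.sum_equiv (Equiv.piCongrRight fun _ => σ) _ _ fun x => ?_).symm
  change _ = ((univ.filter fun i => σ (x i) = σ z).card : ℝ) / hitCount S (σ ∘ x)
  simp only [σ.apply_eq_iff_eq, hitCount_perm_comp S σ hσ]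

lemma occurrenceWeight_eq_of_mem {S : Finset Z} {z z' : Z} (hz : z ∈ S) (hz' : z' ∈ S) :
    occurrenceWeight S m z' = occurrenceWeight S m z := by
  have hswap : ∀ a, Equiv.swap z z' a ∈ S ↔ a ∈ S := fun a => by
    rcases eq_or_ne a z with rfl | ha
    · simp [hz, hz']
    rcases eq_or_ne a z' with rfl | ha'
    · simp [hz, hz']
    rw [Equiv.swap_apply_of_ne_of_ne ha ha']
  simpa using occurrenceWeight_perm S (Equiv.swap z z') hswap z

end GroupAverage

section Expectation

variable {Z : Type*} [Fintype Z] [DecidableEq Z] {m : ℕ}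

theorem sum_groupAvg (S : Finset Z) (f : Z → ℝ) :
    ∑ x : Fin m → Z, groupAvg S f x
      = (univ.filter fun x : Fin m → Z => 1 ≤ hitCount S x).card * ((∑ z ∈ S, f z) / S.card) := by
  rcases S.eq_empty_or_nonempty with rfl | ⟨z₀, hz₀⟩
  · -- both sides vanish; on the right through `0 / 0 = 0`
    simp [sum_groupAvg_eq_sum_mul_occurrenceWeight]
  have hconst (g : Z → ℝ) :
      ∑ x : Fin m → Z, groupAvg S g x = occurrenceWeight S m z₀ * ∑ z ∈ S, g z := by
    rw [sum_groupAvg_eq_sum_mul_occurrenceWeight, mul_sum]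
    exact sum_congr rfl fun z hz => by rw [occurrenceWeight_eq_of_mem hz₀ hz, mul_comm]
  have hcard : ((univ.filter fun x : Fin m → Z => 1 ≤ hitCount S x).card : ℝ)
      = occurrenceWeight S m z₀ * S.card := by
    have hone := hconst fun _ => 1
    simp only [groupAvg_one, sum_const, nsmul_one] at hone
    rw [natCast_card_filter, hone]
  have hS : (S.card : ℝ) ≠ 0 := Nat.cast_ne_zero.2 (card_ne_zero_of_mem hz₀)
  rw [hconst, hcard, mul_assoc, mul_div_cancel₀ _ hS]

lemma card_filter_one_le_hitCount (S : Finset Z) :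
    ((univ.filter fun x : Fin m → Z => 1 ≤ hitCount S x).card : ℝ)
      = (Fintype.card Z : ℝ) ^ m - ((Fintype.card Z : ℝ) - S.card) ^ m := by
  have hmiss : univ.filter (fun x : Fin m → Z => ¬ 1 ≤ hitCount S x)
      = Fintype.piFinset fun _ => Sᶜ := by
    ext x
    simp only [mem_filter, mem_univ, true_and, Fintype.mem_piFinset, mem_compl, hitCount,
      not_le, Nat.lt_one_iff, card_eq_zero, filter_eq_empty_iff, true_implies]
  have htotal := card_filter_add_card_filter_not (s := (univ : Finset (Fin m → Z)))
    (p := fun x => 1 ≤ hitCount S x)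
  rw [hmiss, Fintype.card_piFinset_const, card_compl, card_univ, Fintype.card_fun,
    Fintype.card_fin] at htotal
  rw [eq_sub_iff_add_eq, ← Nat.cast_sub (card_le_univ S), ← Nat.cast_pow, ← Nat.cast_pow,
    ← Nat.cast_add, htotal]

theorem sum_groupAvg_div_card [Nonempty Z] (S : Finset Z) (f : Z → ℝ) :
    (∑ x : Fin m → Z, groupAvg S f x) / Fintype.card (Fin m → Z)
      = (1 - ((Fintype.card Z - S.card : ℝ) / Fintype.card Z) ^ m)
          * ((∑ z ∈ S, f z) / S.card) := by
  have hZ : (Fintype.card Z : ℝ) ≠ 0 := Nat.cast_ne_zero.2 Fintype.card_ne_zero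
  rw [sum_groupAvg, card_filter_one_le_hitCount, Fintype.card_fun, Fintype.card_fin,
    Nat.cast_pow, div_pow]
  field_simp

theorem sum_filter_groupAvg_div_card {S : Finset Z} (hS : S.Nonempty) (hm : 1 ≤ m)
    (f : Z → ℝ) :
    (∑ x ∈ univ.filter (fun x : Fin m → Z => 1 ≤ hitCount S x), groupAvg S f x)
        / (univ.filter fun x : Fin m → Z => 1 ≤ hitCount S x).card
      = (∑ z ∈ S, f z) / S.card := by
  obtain ⟨z₀, hz₀⟩ := hS
  have hconst_batch : (fun _ => z₀) ∈ univ.filter fun x : Fin m → Z => 1 ≤ hitCount S x := by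
    rw [mem_filter, hitCount, filter_true_of_mem fun i _ => hz₀, card_univ, Fintype.card_fin]
    exact ⟨mem_univ _, hm⟩
  rw [sum_filter_of_ne fun x _ => one_le_hitCount_of_groupAvg_ne_zero, sum_groupAvg,
    mul_div_cancel_left₀ _ (Nat.cast_ne_zero.2 (card_ne_zero_of_mem hconst_batch))]

end Expectation

theorem gce_unbiasedness_per_group_loss_general
    {Z : Type*} [Fintype Z] [DecidableEq Z] [Nonempty Z] {p : ℕ}
    (S : Fin p → Finset Z)
    (hne : ∀ k, (S k).Nonempty)
    (f : Z → ℝ) (m : ℕ) (hm : 1 ≤ m) :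
    ((∑ x : Fin m → Z, (1 / (p : ℝ)) * ∑ k, groupAvg (S k) f x)
        / (Fintype.card (Fin m → Z) : ℝ)
      = (1 / (p : ℝ)) * ∑ k,
          (1 - (((Fintype.card Z : ℝ) - ((S k).card : ℝ)) / (Fintype.card Z : ℝ)) ^ m)
            * ((∑ z ∈ S k, f z) / ((S k).card : ℝ))) ∧
    (∀ k,
      (∑ x ∈ Finset.univ.filter (fun x : Fin m → Z => 1 ≤ hitCount (S k) x),
          groupAvg (S k) f x)
          / ((Finset.univ.filter fun x : Fin m → Z => 1 ≤ hitCount (S k) x).card : ℝ)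
        = (∑ z ∈ S k, f z) / ((S k).card : ℝ)) := by
  refine ⟨?_, fun k => sum_filter_groupAvg_div_card (hne k) hm f⟩
  rw [← mul_sum, mul_div_assoc, sum_comm, sum_div]
  simp only [sum_groupAvg_div_card]

/-- **GCE unbiasedness for the per-group loss.** Let `Z` be a nonempty
finite set partitioned into nonempty groups `S 1, …, S p`, `f : Z → ℝ` and `m ≥ 1`.
For a uniform batch `x ∈ Z^m` and `F̂(x) = (1/p) Σ_k A_k(x)`, we have
`𝔼[F̂] = (1/p) Σ_k P₁(k) · (1/|S k|) Σ_{z ∈ S k} f z` with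
`P₁(k) = 1 - ((|Z| - |S k|)/|Z|)^m`; moreover for each group `k` the conditional
expectation of `A_k(x)` given that the batch contains at least one element of `S k`
equals `(1/|S k|) Σ_{z ∈ S k} f z`. -/
theorem gce_unbiasedness_per_group_loss
    {Z : Type*} [Fintype Z] [DecidableEq Z] [Nonempty Z] {p : ℕ}
    (S : Fin p → Finset Z)
    (hne : ∀ k, (S k).Nonempty)
    (hdisj : ∀ i j, i ≠ j → Disjoint (S i) (S j))
    (hcover : ∀ z : Z, ∃ i, z ∈ S i)
    (f : Z → ℝ) (m : ℕ) (hm : 1 ≤ m) :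
    ((∑ x : Fin m → Z, (1 / (p : ℝ)) * ∑ k, groupAvg (S k) f x)
        / (Fintype.card (Fin m → Z) : ℝ)
      = (1 / (p : ℝ)) * ∑ k,
          (1 - (((Fintype.card Z : ℝ) - ((S k).card : ℝ)) / (Fintype.card Z : ℝ)) ^ m)
            * ((∑ z ∈ S k, f z) / ((S k).card : ℝ))) ∧
    (∀ k,
      (∑ x ∈ Finset.univ.filter (fun x : Fin m → Z => 1 ≤ hitCount (S k) x),
          groupAvg (S k) f x)
          / ((Finset.univ.filter fun x : Fin m → Z => 1 ≤ hitCount (S k) x).card : ℝ)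
        = (∑ z ∈ S k, f z) / ((S k).card : ℝ)) :=
  gce_unbiasedness_per_group_loss_general S hne f m hm
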